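/- For every nonzero quadruple (s₁,s₂,s₃,s₄) ∈ ℤ⁴, define the integer weights γ_a = −s₂, γ_b = −s₂−s₃, γ_c = −s₂−2s₃, γ_d = −s₄, γ_e = −s₃−s₄, γ_f = −s₁, γ_g = 2s₁+3s₂+4s₃+2s₄. If v = (aX²+bXY+cY², dX+eY, f, g) ∈ V₈ has coefficients such that, for every x ∈ {a,b,c,d,e,f,g}, the coefficient x is 0 whenever γ_x < 0, then Δ₈(v) = 0. -/

import Mathlib

set_option maxHeartbeats 1000000


/- Δ₈(v) = (f²g(b²−4ac)(cd²−bde+ae²))² for v = (aX²+bXY+cY², dX+eY, f, g) ∈ V₈. -/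
def Delta8 {L : Type*} [CommRing L] (c : Fin 7 → L) : L :=
  ((c 5) ^ 2 * c 6 * ((c 1) ^ 2 - 4 * c 0 * c 2)
      * (c 2 * (c 3) ^ 2 - c 1 * c 3 * c 4 + c 0 * (c 4) ^ 2)) ^ 2

/-
STATEMENT 17 (Lemma 6.2 / `lem-invar8`): for every nonzero (s₁,s₂,s₃,s₄) ∈ ℤ⁴, if all
coordinates of v = (aX²+bXY+cY², dX+eY, f, g) ∈ V₈ whose weight (with respect to the
corresponding cocharacter) is negative vanish, then Δ₈(v) = 0.  The coordinates
c 0,…,c 6 correspond to a,b,c,d,e,f,g of the paper.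
-/
theorem Delta8_eq_zero_of_no_negative_weights
    {L : Type*} [Field L] [IsAlgClosed L]
    (s₁ s₂ s₃ s₄ : ℤ) (hs : ¬(s₁ = 0 ∧ s₂ = 0 ∧ s₃ = 0 ∧ s₄ = 0))
    (c : Fin 7 → L)
    (h0 : (-s₂ : ℤ) < 0 → c 0 = 0)
    (h1 : (-s₂ - s₃ : ℤ) < 0 → c 1 = 0)
    (h2 : (-s₂ - 2*s₃ : ℤ) < 0 → c 2 = 0)
    (h3 : (-s₄ : ℤ) < 0 → c 3 = 0)
    (h4 : (-s₃ - s₄ : ℤ) < 0 → c 4 = 0)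
    (h5 : (-s₁ : ℤ) < 0 → c 5 = 0)
    (h6 : (2*s₁ + 3*s₂ + 4*s₃ + 2*s₄ : ℤ) < 0 → c 6 = 0) :
    Delta8 c = 0 := by
  by_cases hf : (-s₁ : ℤ) < 0
  · simp [Delta8, h5 hf]
  by_cases hg : (2*s₁ + 3*s₂ + 4*s₃ + 2*s₄ : ℤ) < 0
  · simp [Delta8, h6 hg]
  push_neg at hf hg
  have key : ((-s₂ - s₃ : ℤ) < 0 ∧ ((-s₂ : ℤ) < 0 ∨ (-s₂ - 2*s₃ : ℤ) < 0)) ∨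
      (((-s₂ - 2*s₃ : ℤ) < 0 ∨ (-s₄ : ℤ) < 0) ∧
       ((-s₂ - s₃ : ℤ) < 0 ∨ (-s₄ : ℤ) < 0 ∨ (-s₃ - s₄ : ℤ) < 0) ∧
       ((-s₂ : ℤ) < 0 ∨ (-s₃ - s₄ : ℤ) < 0)) := by omega
  rcases key with ⟨hb, ha | hc⟩ | ⟨hA, hB, hC⟩
  · simp [Delta8, h1 hb, h0 ha]
  · simp [Delta8, h1 hb, h2 hc]
  · have e1 : c 2 * (c 3)^2 = 0 := by rcases hA with h | h <;> [simp [h2 h]; simp [h3 h]]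
    have e2 : c 1 * c 3 * c 4 = 0 := by rcases hB with h | h | h <;> [simp [h1 h]; simp [h3 h]; simp [h4 h]]
    have e3 : c 0 * (c 4)^2 = 0 := by rcases hC with h | h <;> [simp [h0 h]; simp [h4 h]]
    simp [Delta8, e1, e2, e3]
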